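/- arXiv:2011.14260 — 2 statements merged into one kernel-verified Lean document; each statement's English description precedes it below -/
import Mathlib

section
/- Amalgamation commutes with matrix mutation: let I, I' be disjoint finite sets, ε an integer matrix on I×I, ε' an integer matrix on I'×I', F ⊆ I, F' ⊆ I' subsets, φ : F → F' a bijection, and let τ be the amalgamation of ε and ε' with respect to (F, F', φ), an integer matrix on J := I ⊔ (I'∖F'). Then for every k ∈ I∖F, the matrix mutation μ_k(τ) equals the amalgamation, with respect to the same gluing data (F, F', φ), of μ_k(ε) and ε'. -/
/-- Matrix mutation of an integer matrix at a vertex `k`. -/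
def matMutZ {J : Type*} [DecidableEq J] (ε : J → J → ℤ) (k : J) : J → J → ℤ :=
  fun i j =>
    if i = k ∨ j = k then -ε i j
    else ε i j + (|ε i k| * ε k j + ε i k * |ε k j|) / 2

/-- Amalgamation of two integer matrices `ε` on `I×I` and `ε'` on `I'×I'` with respect to
gluing data `(F, F', φ)`.  The amalgamated index set is `I ⊕ (I'∖F')`, where each `i ∈ F`
represents the glued vertex `{i, φ(i)}`. -/
def amalg {I I' : Type*} [DecidableEq I] [DecidableEq I']
    (F : Finset I) (F' : Finset I') (φ : {i // i ∈ F} ≃ {j // j ∈ F'})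
    (ε : I → I → ℤ) (ε' : I' → I' → ℤ) :
    (I ⊕ {j : I' // j ∉ F'}) → (I ⊕ {j : I' // j ∉ F'}) → ℤ
  | Sum.inl i, Sum.inl j =>
      if hi : i ∈ F then
        if hj : j ∈ F then ε i j + ε' (φ ⟨i, hi⟩).1 (φ ⟨j, hj⟩).1 else ε i j
      else ε i j
  | Sum.inl i, Sum.inr j => if hi : i ∈ F then ε' (φ ⟨i, hi⟩).1 j.1 else 0
  | Sum.inr i, Sum.inl j => if hj : j ∈ F then ε' i.1 (φ ⟨j, hj⟩).1 else 0
  | Sum.inr i, Sum.inr j => ε' i.1 j.1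

/-- Amalgamation commutes with matrix mutation at an unglued vertex `k ∈ I∖F`. -/
theorem amalgamation_commutes_with_mutation {I I' : Type*}
    [Fintype I] [Fintype I'] [DecidableEq I] [DecidableEq I']
    (F : Finset I) (F' : Finset I') (φ : {i // i ∈ F} ≃ {j // j ∈ F'})
    (ε : I → I → ℤ) (ε' : I' → I' → ℤ) (k : I) (hk : k ∉ F) :
    matMutZ (amalg F F' φ ε ε') (Sum.inl k) = amalg F F' φ (matMutZ ε k) ε' := by
  have hrow : ∀ j : I, amalg F F' φ ε ε' (Sum.inl k) (Sum.inl j) = ε k j := by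
    intro j; simp [amalg, hk]
  have hrow' : ∀ j, amalg F F' φ ε ε' (Sum.inl k) (Sum.inr j) = 0 := by
    intro j; simp [amalg, hk]
  have hcol : ∀ i : I, amalg F F' φ ε ε' (Sum.inl i) (Sum.inl k) = ε i k := by
    intro i; simp [amalg, hk]
  have hcol' : ∀ i, amalg F F' φ ε ε' (Sum.inr i) (Sum.inl k) = 0 := by
    intro i; simp [amalg, hk]
  funext i j
  cases i with
  | inl i =>
    cases j with
    | inl j =>
      simp only [matMutZ, Sum.inl.injEq, hcol i, hrow j]
      by_cases h : i = k ∨ j = k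
      · rcases h with h | h
        · subst h
          have hiF : i ∉ F := hk
          simp [amalg, hiF, matMutZ]
        · subst h
          have hjF : j ∉ F := hk
          simp [amalg, hjF, matMutZ]
      · push_neg at h
        simp only [if_neg (by tauto), amalg, matMutZ, if_neg (by tauto : ¬(i = k ∨ j = k))]
        split_ifs <;> ring
    | inr j =>
      simp only [matMutZ, reduceCtorEq, or_false, Sum.inl.injEq, hcol i, hrow']
      by_cases h : i = k
      · subst h
        simp [amalg, hk]
      · simp only [if_neg h, amalg, mul_zero, abs_zero, zero_mul, add_zero,
          Int.zero_ediv, add_zero]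
  | inr i =>
    cases j with
    | inl j =>
      simp only [matMutZ, reduceCtorEq, false_or, Sum.inl.injEq, hcol' i, hrow j]
      by_cases h : j = k
      · subst h
        have hjF : j ∉ F := hk
        simp [amalg, hjF]
      · simp only [if_neg h, amalg, zero_mul, abs_zero, mul_zero, add_zero,
          Int.zero_ediv, add_zero]
    | inr j =>
      simp only [matMutZ, reduceCtorEq, or_self, if_false, hcol' i, hrow' j, amalg]
      simp [hk]
end

section
/- Amalgamation of cluster Poisson variables commutes with mutation: let I, I' be disjoint finite sets, ε an integer matrix on I×I, ε' an integer matrix on I'×I', F ⊆ I, F' ⊆ I' subsets, φ : F → F' a bijection, τ the amalgamation of ε and ε' on J := I ⊔ (I'∖F'), K a field, X = (X_i)_{i∈I} and X' = (X'_i)_{i∈I'} families of nonzero elements of K, and Y = (Y_i)_{i∈J} the amalgamated family defined by Y_i = X_i for i ∈ I∖F, Y_i = X_i·X'_{φ(i)} for i ∈ F, and Y_i = X'_i for i ∈ I'∖F'. Then for every k ∈ I∖F with X_k ≠ 0, the cluster Poisson transformation μ_k^{τ}(Y) equals the amalgamation of μ_k^{ε}(X) and X'; that is, (μ_k^{τ}(Y))_i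 = (μ_k^{ε}(X))_i for i ∈ I∖F, (μ_k^{τ}(Y))_i = (μ_k^{ε}(X))_i·X'_{φ(i)} for i ∈ F, and (μ_k^{τ}(Y))_i = X'_i for i ∈ I'∖F'. -/
/-- The cluster Poisson transformation at a vertex `k` with respect to an integer
matrix `ε`: `X'_k = X_k⁻¹` and `X'_i = X_i·(1 + X_k^{−sgn(ε_{ik})})^{−ε_{ik}}` for `i ≠ k`. -/
noncomputable def clusterPoissonMut {J : Type*} [DecidableEq J] {K : Type*} [Field K]
    (ε : J → J → ℤ) (k : J) (X : J → K) : J → K :=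
  fun i =>
    if i = k then (X k)⁻¹
    else X i * (1 + X k ^ (-(ε i k).sign)) ^ (-(ε i k))

/-- The amalgamated family of cluster Poisson variables:
`Y_i = X_i` for `i ∈ I∖F`, `Y_i = X_i·X'_{φ(i)}` for `i ∈ F`, `Y_j = X'_j` for `j ∈ I'∖F'`. -/
def amalgVars {I I' : Type*} [DecidableEq I] {K : Type*} [Field K]
    (F : Finset I) (F' : Finset I') (φ : {i // i ∈ F} ≃ {j // j ∈ F'})
    (X : I → K) (X' : I' → K) : (I ⊕ {j : I' // j ∉ F'}) → K
  | Sum.inl i => if hi : i ∈ F then X i * X' (φ ⟨i, hi⟩).1 else X i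
  | Sum.inr j => X' j.1

/-- Amalgamation of cluster Poisson variables commutes with mutation at an unglued
vertex `k ∈ I∖F`. -/
theorem amalgamation_vars_commutes_with_mutation {I I' : Type*}
    [Fintype I] [Fintype I'] [DecidableEq I] [DecidableEq I'] {K : Type*} [Field K]
    (F : Finset I) (F' : Finset I') (φ : {i // i ∈ F} ≃ {j // j ∈ F'})
    (ε : I → I → ℤ) (ε' : I' → I' → ℤ)
    (X : I → K) (X' : I' → K) (hX : ∀ i, X i ≠ 0) (hX' : ∀ j, X' j ≠ 0)
    (k : I) (hk : k ∉ F) (hXk : X k ≠ 0) :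
    (∀ i : I, i ∉ F →
        clusterPoissonMut (amalg F F' φ ε ε') (Sum.inl k) (amalgVars F F' φ X X') (Sum.inl i)
          = clusterPoissonMut ε k X i) ∧
    (∀ (i : I) (hi : i ∈ F),
        clusterPoissonMut (amalg F F' φ ε ε') (Sum.inl k) (amalgVars F F' φ X X') (Sum.inl i)
          = clusterPoissonMut ε k X i * X' (φ ⟨i, hi⟩).1) ∧
    (∀ j : {j : I' // j ∉ F'},
        clusterPoissonMut (amalg F F' φ ε ε') (Sum.inl k) (amalgVars F F' φ X X') (Sum.inr j)
          = X' j.1) := by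
  refine ⟨?_, ?_, ?_⟩
  · intro i hi
    simp only [clusterPoissonMut, amalg, amalgVars, Sum.inl.injEq, hk, hi, dif_neg,
      not_false_iff]
  · intro i hi
    have hik : i ≠ k := fun h => hk (h ▸ hi)
    simp only [clusterPoissonMut, amalg, amalgVars, Sum.inl.injEq, hik, if_false,
      dif_pos hi, dif_neg hk]
    ring
  · intro j
    simp [clusterPoissonMut, amalg, amalgVars, dif_neg hk]
end
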